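/- Let P be an n-polytope in ℝⁿ and let S be a flag simplex of P associated with a complete flag F of P. Then there exists a flag simplex T of P associated with F such that S ⊂ T ⊂ P and S is a flag simplex of T. -/

import Mathlib

open Set MeasureTheory Filter
open scoped Topology RealInnerProductSpace symmDiff

noncomputable section

abbrev Euc (d : ℕ) : Type := EuclideanSpace ℝ (Fin d)

variable {d : ℕ}

/-- `P` is a polytope: the convex hull of finitely many points, with nonempty interior. -/
def IsPolytope (P : Set (Euc d)) : Prop :=
  ∃ V : Set (Euc d), V.Finite ∧ P = convexHull ℝ V ∧ (interior P).Nonempty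

/-- `F` is a face of `P`: the intersection of `P` with a supporting hyperplane. -/
def IsFace (P F : Set (Euc d)) : Prop :=
  ∃ (f : Euc d →L[ℝ] ℝ) (c : ℝ), f ≠ 0 ∧ (∀ x ∈ P, f x ≤ c) ∧ (∃ x ∈ P, f x = c) ∧
    F = {x ∈ P | f x = c}

/-- `F` is an `i`-face of `P`: a face spanning an `i`-dimensional affine subspace. -/
def IsFaceOfDim (P : Set (Euc d)) (i : ℕ) (F : Set (Euc d)) : Prop :=
  IsFace P F ∧ Module.finrank ℝ (vectorSpan ℝ F) = i

/-- A complete flag of `P`: an increasing sequence `F 0 ⊆ … ⊆ F (n-1)` with `F i` an `i`-face. -/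
def IsCompleteFlag (n : ℕ) (P : Set (Euc d)) (F : Fin n → Set (Euc d)) : Prop :=
  (∀ i : Fin n, IsFaceOfDim P (i : ℕ) (F i)) ∧ ∀ i j : Fin n, i ≤ j → F i ⊆ F j

/-- `v` is a vertex of `P`, i.e. `{v}` is a (0-dimensional) face of `P`. -/
def IsVertex (P : Set (Euc d)) (v : Euc d) : Prop := IsFace P {v}

/-- The set of complete flags of `P`. -/
def flags (n : ℕ) (P : Set (Euc d)) : Set (Fin n → Set (Euc d)) :=
  {F | IsCompleteFlag n P F}

/-- The set of complete flags of `P` whose `0`-face is the vertex `{v}`. -/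
def flagsAt (n : ℕ) (P : Set (Euc d)) (v : Euc d) : Set (Fin n → Set (Euc d)) :=
  {F | IsCompleteFlag n P F ∧ ∀ i : Fin n, v ∈ F i}

/-- `S` is an `n`-simplex: the convex hull of `n+1` affinely independent points. -/
def IsSimplex (n : ℕ) (S : Set (Euc d)) : Prop :=
  ∃ v : Fin (n + 1) → Euc d, AffineIndependent ℝ v ∧ S = convexHull ℝ (Set.range v)

/-- `S` is a flag simplex of `P` associated with the complete flag `F`: an `n`-simplex whose
vertices can be labelled so that `v i ∈ relint (F i)` for `i < n` and `v n ∈ int P`. -/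
def IsFlagSimplexAssoc (n : ℕ) (P : Set (Euc d)) (F : Fin n → Set (Euc d))
    (S : Set (Euc d)) : Prop :=
  ∃ v : Fin (n + 1) → Euc d, AffineIndependent ℝ v ∧ S = convexHull ℝ (Set.range v) ∧
    (∀ i : Fin n, v i.castSucc ∈ intrinsicInterior ℝ (F i)) ∧
    v (Fin.last n) ∈ interior P

/-- `S` is a flag simplex of `P`. -/
def IsFlagSimplex (n : ℕ) (P S : Set (Euc d)) : Prop :=
  ∃ F : Fin n → Set (Euc d), IsCompleteFlag n P F ∧ IsFlagSimplexAssoc n P F S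

/-- The weighted floating body `P_δ^φ`: the intersection of all closed half-spaces `H⁻`
whose complementary half-space `H⁺` cuts off weighted volume at most `δ` from `P`. -/
def weightedFloatingBody (P : Set (Euc d)) (φ : Euc d → ℝ) (δ : ℝ) : Set (Euc d) :=
  ⋂₀ {H | ∃ (f : Euc d →L[ℝ] ℝ) (c : ℝ), f ≠ 0 ∧ H = {x | f x ≤ c} ∧
      (∫ x in P ∩ {x | c ≤ f x}, φ x) ≤ δ}

/-- The convex floating body `P_δ`. -/
def floatingBody (P : Set (Euc d)) (δ : ℝ) : Set (Euc d) :=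
  ⋂₀ {H | ∃ (f : Euc d →L[ℝ] ℝ) (c : ℝ), f ≠ 0 ∧ H = {x | f x ≤ c} ∧
      (volume (P ∩ {x | c ≤ f x})).toReal ≤ δ}

/-- `A⁺(T, z i, δ)`: the union of all sets `T ∩ int H⁺` over closed half-spaces `H⁺` with
`λ_n(T ∩ H⁺) ≤ δ`, `z i ∈ int H⁺` and `z j ∉ H⁺` for `j ≠ i`. -/
def Aplus (n : ℕ) (T : Set (Euc d)) (z : Fin (n + 1) → Euc d) (i : Fin (n + 1))
    (δ : ℝ) : Set (Euc d) :=
  ⋃₀ {A | ∃ (f : Euc d →L[ℝ] ℝ) (c : ℝ), f ≠ 0 ∧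
      A = T ∩ interior {x | c ≤ f x} ∧
      (volume (T ∩ {x | c ≤ f x})).toReal ≤ δ ∧
      z i ∈ interior {x | c ≤ f x} ∧
      ∀ j : Fin (n + 1), j ≠ i → z j ∉ {x | c ≤ f x}}

/-!
Label the vertices of `S` as `v 0, …, v n` with `v k` in the relative interior of `G k`, where
`G k = F k` for `k < n` and `G n = P`. Push each `v (k+1)` slightly beyond itself, away from
`v k`, to a point `w (k+1)` still in the relative interior of `G (k+1)`, and put `w 0 = v 0`.
Then every `v (k+1)` lies on the open segment from `v k` to `w (k+1)`, so the `w` affinely span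
the `v`, hence everything, and are affinely independent. Inductively, the barycentric coordinates
of `v k` with respect to `w` are positive at the indices `≤ k` and vanish beyond: `v k` lies in the
relative interior of the face `conv (w 0, …, w k)` of `T = conv w`, so `S` is a flag simplex of
`T`.
-/

section IntrinsicInterior

variable {E : Type*} [NormedAddCommGroup E] [NormedSpace ℝ E]

theorem intrinsicInterior_eq_interior_of_affineSpan_eq_top {s : Set E}
    (h : affineSpan ℝ s = ⊤) : intrinsicInterior ℝ s = interior s := by
  refine subset_antisymm (fun x hx => ?_) interior_subset_intrinsicInterior
  obtain ⟨y, hy, rfl⟩ := mem_intrinsicInterior.1 hx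
  have hopen : IsOpen (affineSpan ℝ s : Set E) := by
    rw [h, AffineSubspace.top_coe]
    exact isOpen_univ
  exact interior_mono (image_preimage_subset _ _)
    (hopen.isOpenMap_subtype_val.image_interior_subset _ ⟨y, hy, rfl⟩)

theorem exists_mem_intrinsicInterior_mem_openSegment {C : Set E} {x y : E}
    (hx : x ∈ intrinsicInterior ℝ C) (hy : y ∈ affineSpan ℝ C) :
    ∃ z ∈ intrinsicInterior ℝ C, x ∈ openSegment ℝ y z := by
  obtain ⟨x', hx', rfl⟩ := mem_intrinsicInterior.1 hx
  let γ : ℝ → affineSpan ℝ C := fun t => ⟨AffineMap.lineMap y x' t, AffineMap.lineMap_mem t hy x'.2⟩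
  have hγ : Continuous γ := by fun_prop
  have hγ1 : γ 1 = x' := Subtype.ext (AffineMap.lineMap_apply_one _ _)
  have hnhds : ∀ᶠ t in 𝓝[>] (1 : ℝ), γ t ∈ interior ((↑) ⁻¹' C) :=
    nhdsWithin_le_nhds ((isOpen_interior.preimage hγ).mem_nhds (by rwa [mem_preimage, hγ1]))
  obtain ⟨t, ht, ht1 : 1 < t⟩ := (hnhds.and self_mem_nhdsWithin).exists
  have ht0 : 0 < t := zero_lt_one.trans ht1
  refine ⟨γ t, mem_intrinsicInterior.2 ⟨γ t, ht, rfl⟩, ?_⟩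
  rw [openSegment_eq_image_lineMap]
  refine ⟨t⁻¹, ⟨inv_pos.2 ht0, inv_lt_one_of_one_lt₀ ht1⟩, ?_⟩
  simp [γ, inv_mul_cancel₀ ht0.ne']

end IntrinsicInterior

namespace AffineBasis

variable {ι E : Type*} [Fintype ι] [NormedAddCommGroup E] [NormedSpace ℝ E]

theorem mem_convexHull_image_iff (b : AffineBasis ι ℝ E) {s : Set ι} {x : E} :
    x ∈ convexHull ℝ (b '' s) ↔ (∀ i, 0 ≤ b.coord i x) ∧ ∀ i ∉ s, b.coord i x = 0 := by
  constructor
  · intro hx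
    refine ⟨?_, fun i hi => ?_⟩
    · have hx' := convexHull_mono (image_subset_range _ _) hx
      rw [b.convexHull_eq_nonneg_coord] at hx'
      exact hx'
    · refine convexHull_min ?_ ((convex_singleton (0 : ℝ)).affine_preimage (b.coord i)) hx
      rintro _ ⟨j, hj, rfl⟩
      exact b.coord_apply_ne (ne_of_mem_of_not_mem hj hi).symm
  · rintro ⟨hnonneg, hzero⟩
    rw [← b.linear_combination_coord_eq_self x, ← finsum_eq_sum_of_fintype]
    refine (convex_convexHull ℝ _).finsum_mem hnonneg ?_ fun i hi => ?_
    · rw [finsum_eq_sum_of_fintype, b.sum_coord_apply_eq_one]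
    · exact subset_convexHull ℝ _ ⟨i, not_not.1 (mt (hzero i) hi), rfl⟩

theorem mem_intrinsicInterior_convexHull_image [FiniteDimensional ℝ E] (b : AffineBasis ι ℝ E)
    {s : Set ι} {x : E} (hpos : ∀ i ∈ s, 0 < b.coord i x) (hzero : ∀ i ∉ s, b.coord i x = 0) :
    x ∈ intrinsicInterior ℝ (convexHull ℝ (b '' s)) := by
  classical
  set C := convexHull ℝ (b '' s)
  have hcoord_nonneg : ∀ y : E, (∀ i ∈ s, 0 < b.coord i y) → (∀ i ∉ s, b.coord i y = 0) →
      ∀ i, 0 ≤ b.coord i y := by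
    intro y hp hz i
    by_cases hi : i ∈ s
    exacts [(hp i hi).le, (hz i hi).ge]
  have hxC : x ∈ C := b.mem_convexHull_image_iff.2 ⟨hcoord_nonneg x hpos hzero, hzero⟩
  have hspan : ∀ i ∉ s, ∀ y ∈ affineSpan ℝ C, b.coord i y = 0 := by
    intro i hi y hy
    have hle : affineSpan ℝ C ≤ (affineSpan ℝ {(0 : ℝ)}).comap (b.coord i) :=
      affineSpan_le.2 fun z hz => AffineSubspace.mem_comap.2 <|
        (AffineSubspace.mem_affineSpan_singleton ℝ ℝ).2 ((b.mem_convexHull_image_iff.1 hz).2 i hi)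
    exact (AffineSubspace.mem_affineSpan_singleton ℝ ℝ).1 (AffineSubspace.mem_comap.1 (hle hy))
  let U : Set E := ⋂ i ∈ s, {y | 0 < b.coord i y}
  have hU : IsOpen U := s.toFinite.isOpen_biInter fun i _ =>
    isOpen_lt continuous_const (b.coord i).continuous_of_finiteDimensional
  have hxU : x ∈ U := mem_iInter₂.2 hpos
  have hUC : ((↑) ⁻¹' U : Set (affineSpan ℝ C)) ⊆ (↑) ⁻¹' C := by
    intro y hy
    have hz : ∀ i ∉ s, b.coord i y = 0 := fun i hi => hspan i hi y y.2
    exact b.mem_convexHull_image_iff.2 ⟨hcoord_nonneg y (mem_iInter₂.1 hy) hz, hz⟩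
  refine mem_intrinsicInterior.2 ⟨⟨x, subset_affineSpan ℝ C hxC⟩, ?_, rfl⟩
  exact interior_maximal hUC (hU.preimage continuous_subtype_val) hxU

end AffineBasis

theorem AffineIndependent.of_range_subset_affineSpan {k V P : Type*} [DivisionRing k]
    [AddCommGroup V] [Module k V] [AddTorsor V P] [FiniteDimensional k V] {m : ℕ}
    {p q : Fin (m + 1) → P} (hp : AffineIndependent k p) (h : range p ⊆ affineSpan k (range q)) :
    AffineIndependent k q := by
  rw [affineIndependent_iff_le_finrank_vectorSpan k q (Fintype.card_fin _)]
  calc m = Module.finrank k (vectorSpan k (range p)) :=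
        (hp.finrank_vectorSpan (Fintype.card_fin _)).symm
    _ ≤ Module.finrank k (vectorSpan k (range q)) := by
      rw [← direction_affineSpan, ← direction_affineSpan]
      exact Submodule.finrank_mono (AffineSubspace.direction_le (affineSpan_le.2 h))

section OpenSegmentChain

variable {E : Type*} [NormedAddCommGroup E] [NormedSpace ℝ E] {m : ℕ} {v w : Fin (m + 1) → E}

theorem exists_openSegment_chain {G : Fin (m + 1) → Set E} (hG : Monotone G)
    (hv : ∀ k, v k ∈ intrinsicInterior ℝ (G k)) :
    ∃ w : Fin (m + 1) → E, w 0 = v 0 ∧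
      (∀ k : Fin m, v k.succ ∈ openSegment ℝ (v k.castSucc) (w k.succ)) ∧
      ∀ k, w k ∈ intrinsicInterior ℝ (G k) := by
  have hext := fun k : Fin m => exists_mem_intrinsicInterior_mem_openSegment (hv k.succ)
    (subset_affineSpan ℝ _ (hG (Fin.castSucc_le_succ k) (intrinsicInterior_subset (hv _))))
  choose z hz hseg using hext
  exact ⟨Fin.cons (v 0) z, rfl, by simpa using hseg, Fin.cases (hv 0) (by simpa using hz)⟩

theorem range_subset_affineSpan_of_openSegment_chain (h0 : v 0 = w 0)
    (hstep : ∀ k : Fin m, v k.succ ∈ openSegment ℝ (v k.castSucc) (w k.succ)) :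
    range v ⊆ affineSpan ℝ (range w) := by
  rintro _ ⟨k, rfl⟩
  induction k using Fin.induction with
  | zero => exact h0 ▸ subset_affineSpan ℝ _ (mem_range_self 0)
  | succ k ih =>
    obtain ⟨c, -, hc⟩ := (openSegment_eq_image_lineMap ℝ _ _).subset (hstep k)
    exact hc ▸ AffineMap.lineMap_mem c ih (subset_affineSpan ℝ _ (mem_range_self _))

theorem AffineBasis.coord_of_openSegment_chain (b : AffineBasis (Fin (m + 1)) ℝ E)
    (h0 : v 0 = b 0) (hstep : ∀ k : Fin m, v k.succ ∈ openSegment ℝ (v k.castSucc) (b k.succ))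
    (k j : Fin (m + 1)) : (j ≤ k → 0 < b.coord j (v k)) ∧ (k < j → b.coord j (v k) = 0) := by
  induction k using Fin.induction generalizing j with
  | zero =>
    rw [h0]
    refine ⟨fun hj => ?_, fun hj => b.coord_apply_ne hj.ne'⟩
    rw [Fin.le_zero_iff.1 hj, b.coord_apply_eq]
    exact one_pos
  | succ k ih =>
    obtain ⟨c, ⟨hc0, hc1⟩, hc⟩ := (openSegment_eq_image_lineMap ℝ _ _).subset (hstep k)
    rw [← hc, AffineMap.apply_lineMap, AffineMap.lineMap_apply_module, smul_eq_mul, smul_eq_mul]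
    refine ⟨fun hj => ?_, fun hj => ?_⟩
    · rcases eq_or_lt_of_le hj with rfl | hj
      · rw [b.coord_apply_eq, (ih _).2 (Fin.castSucc_lt_succ (i := k))]
        linarith
      · rw [b.coord_apply_ne hj.ne]
        nlinarith [(ih j).1 (Fin.le_castSucc_iff.2 hj)]
    · rw [b.coord_apply_ne hj.ne', (ih j).2 ((Fin.castSucc_lt_succ (i := k)).trans hj)]
      ring

end OpenSegmentChain

theorem IsFace.subset {P F : Set (Euc d)} (h : IsFace P F) : F ⊆ P := by
  obtain ⟨f, c, -, -, -, rfl⟩ := h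
  exact sep_subset _ _

theorem isFace_sep_eq_zero {T : Set (Euc d)} (g : Euc d →ᵃ[ℝ] ℝ) (hg : ∀ x ∈ T, 0 ≤ g x)
    (hzero : ∃ x ∈ T, g x = 0) (hne : ∃ x, g x ≠ 0) : IsFace T {x ∈ T | g x = 0} := by
  have hlin : ∀ x, g.linear x = g x - g 0 := fun x => by
    simpa using g.linearMap_vsub x 0
  let f : Euc d →L[ℝ] ℝ := -LinearMap.toContinuousLinearMap g.linear
  have hf : ∀ x, f x = g 0 - g x := fun x => by simp [f, hlin]
  obtain ⟨x₀, hx₀T, hx₀⟩ := hzero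
  obtain ⟨x₁, hx₁⟩ := hne
  refine ⟨f, g 0, fun h => hx₁ ?_, fun x hx => ?_, ⟨x₀, hx₀T, by simp [hf, hx₀]⟩, ?_⟩
  · have h₀ := hf x₀
    have h₁ := hf x₁
    rw [h, zero_apply] at h₀ h₁
    linarith
  · linarith [hf x, hg x hx]
  · ext x
    simp [hf]

namespace AffineBasis

variable {ι : Type*} [Fintype ι]

theorem isFaceOfDim_convexHull_image (b : AffineBasis ι ℝ (Euc d)) {s : Finset ι} {m : ℕ}
    (hs : s.card = m + 1) (hj : ∃ j, j ∉ s) :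
    IsFaceOfDim (convexHull ℝ (range b)) m (convexHull ℝ (b '' s)) := by
  classical
  refine ⟨?_, ?_⟩
  · let g : Euc d →ᵃ[ℝ] ℝ := ∑ j ∈ sᶜ, b.coord j
    have hg : ∀ x, g x = ∑ j ∈ sᶜ, b.coord j x := fun x =>
      map_sum (AddMonoidHom.mk' (fun f : Euc d →ᵃ[ℝ] ℝ => f x) fun _ _ => rfl) _ _
    have hT : ∀ x ∈ convexHull ℝ (range b), ∀ j, 0 ≤ b.coord j x := by
      rw [b.convexHull_eq_nonneg_coord]
      exact fun x hx => hx
    have hface : {x ∈ convexHull ℝ (range b) | g x = 0} = convexHull ℝ (b '' s) := by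
      ext x
      rw [mem_sep_iff, b.mem_convexHull_image_iff, hg, b.convexHull_eq_nonneg_coord]
      refine and_congr_right fun hx => ?_
      rw [Finset.sum_eq_zero_iff_of_nonneg fun j _ => hx j]
      simp
    obtain ⟨i, hi⟩ : s.Nonempty := Finset.card_pos.1 (by omega)
    obtain ⟨j, hj⟩ := hj
    rw [← hface]
    refine isFace_sep_eq_zero g (fun x hx => ?_) ⟨b i, ?_, ?_⟩ ⟨b j, ?_⟩
    · rw [hg]
      exact Finset.sum_nonneg fun j _ => hT x hx j
    · exact subset_convexHull ℝ _ (mem_range_self i)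
    · rw [hg]
      exact Finset.sum_eq_zero fun k hk => b.coord_apply_ne (by rintro rfl; simp_all)
    · rw [hg, Finset.sum_eq_single_of_mem (f := fun k => b.coord k (b j)) j (by simpa)
        fun k _ hk => b.coord_apply_ne hk, b.coord_apply_eq]
      exact one_ne_zero
  · rw [← direction_affineSpan, affineSpan_convexHull, direction_affineSpan, ← Finset.coe_image]
    exact b.ind.finrank_vectorSpan_image_finset hs

theorem isFlagSimplex_convexHull {n : ℕ} (b : AffineBasis (Fin (n + 1)) ℝ (Euc d))
    {v : Fin (n + 1) → Euc d} (hv : AffineIndependent ℝ v)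
    (hcoord : ∀ k j, (j ≤ k → 0 < b.coord j (v k)) ∧ (k < j → b.coord j (v k) = 0)) :
    IsFlagSimplex n (convexHull ℝ (range b)) (convexHull ℝ (range v)) := by
  refine ⟨fun i => convexHull ℝ (b '' Iic i.castSucc), ⟨fun i => ?_, fun i j hij => ?_⟩,
    v, hv, rfl, fun i => ?_, ?_⟩
  · dsimp only
    rw [← Finset.coe_Iic]
    exact b.isFaceOfDim_convexHull_image (by simp) ⟨Fin.last n, by simp⟩
  · exact convexHull_mono (image_mono (Iic_subset_Iic.2 (Fin.castSucc_le_castSucc_iff.2 hij)))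
  · exact b.mem_intrinsicInterior_convexHull_image (fun j hj => (hcoord _ j).1 hj)
      fun j hj => (hcoord _ j).2 (not_le.1 hj)
  · rw [b.interior_convexHull]
    exact fun j => (hcoord _ j).1 (Fin.le_last j)

end AffineBasis

theorem IsPolytope.convex {P : Set (Euc d)} (hP : IsPolytope P) : Convex ℝ P := by
  obtain ⟨V, -, rfl, -⟩ := hP
  exact convex_convexHull ℝ V

theorem IsPolytope.affineSpan_eq_top {P : Set (Euc d)} (hP : IsPolytope P) :
    affineSpan ℝ P = ⊤ := by
  obtain ⟨-, -, -, hint⟩ := id hP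
  refine affineSpan_eq_top_of_nonempty_interior ?_
  rwa [hP.convex.convexHull_eq]

theorem IsFlagSimplex.subset {n : ℕ} {P S : Set (Euc d)} (hP : Convex ℝ P)
    (hS : IsFlagSimplex n P S) : S ⊆ P := by
  obtain ⟨F, hF, v, -, rfl, hvF, hvP⟩ := hS
  refine convexHull_min (range_subset_iff.2 (Fin.lastCases (interior_subset hvP) fun i => ?_)) hP
  exact (hF.1 i).1.subset (intrinsicInterior_subset (hvF i))

theorem IsCompleteFlag.monotone_snoc {n : ℕ} {P : Set (Euc d)} {F : Fin n → Set (Euc d)}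
    (hF : IsCompleteFlag n P F) : Monotone (Fin.snoc F P : Fin (n + 1) → Set (Euc d)) := by
  intro k l hkl
  induction l using Fin.lastCases with
  | last =>
    induction k using Fin.lastCases with
    | last => exact subset_rfl
    | cast i =>
      rw [Fin.snoc_castSucc, Fin.snoc_last]
      exact (hF.1 i).1.subset
  | cast j =>
    induction k using Fin.lastCases with
    | last => exact absurd hkl (not_le.2 (Fin.castSucc_lt_last j))
    | cast i =>
      rw [Fin.snoc_castSucc, Fin.snoc_castSucc]
      exact hF.2 i j (Fin.castSucc_le_castSucc_iff.1 hkl)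

/-- **Proposition (ii).** If `S` is a flag simplex of an `n`-polytope `P` associated with
the complete flag `F`, then there exists a flag simplex `T` of `P` associated with `F`
such that `S ⊆ T ⊆ P` and `S` is a flag simplex of `T`. -/
theorem flag_simplex_enlargement (n : ℕ) (P : Set (Euc n)) (hP : IsPolytope P)
    (F : Fin n → Set (Euc n)) (hF : IsCompleteFlag n P F)
    (S : Set (Euc n)) (hS : IsFlagSimplexAssoc n P F S) :
    ∃ T : Set (Euc n), IsFlagSimplexAssoc n P F T ∧ S ⊆ T ∧ T ⊆ P ∧
      IsFlagSimplex n T S := by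
  obtain ⟨v, hv, rfl, hvF, hvP⟩ := hS
  have hrelint := intrinsicInterior_eq_interior_of_affineSpan_eq_top hP.affineSpan_eq_top
  set G : Fin (n + 1) → Set (Euc n) := Fin.snoc F P
  have hvG : ∀ k, v k ∈ intrinsicInterior ℝ (G k) :=
    Fin.lastCases (by simpa [G, hrelint] using hvP) fun i => by simpa [G] using hvF i
  obtain ⟨w, hw0, hstep, hwG⟩ := exists_openSegment_chain hF.monotone_snoc hvG
  have hw : AffineIndependent ℝ w :=
    hv.of_range_subset_affineSpan (range_subset_affineSpan_of_openSegment_chain hw0.symm hstep)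
  let b : AffineBasis (Fin (n + 1)) ℝ (Euc n) :=
    ⟨w, hw, hw.affineSpan_eq_top_iff_card_eq_finrank_add_one.2 (by simp)⟩
  have hT : IsFlagSimplexAssoc n P F (convexHull ℝ (range w)) :=
    ⟨w, hw, rfl, fun i => by simpa [G] using hwG i.castSucc,
      by simpa [G, hrelint] using hwG (Fin.last n)⟩
  have hST := b.isFlagSimplex_convexHull hv (b.coord_of_openSegment_chain hw0.symm hstep)
  exact ⟨_, hT, hST.subset (convex_convexHull ℝ _), IsFlagSimplex.subset hP.convex ⟨F, hF, hT⟩,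
    hST⟩
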